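/- arXiv:0806.2339 — 5 statements merged into one kernel-verified Lean document; each statement's English description precedes it below -/
import Mathlib

section
/- Let A be a real m×n matrix of exact rank k, and let l be an integer with l ≥ k. Let R be a random n×l matrix whose entries are independent standard Gaussian random variables. Then almost surely (with respect to the law of R), the column space of the product A·R equals the column space of A; in particular, rank(A·R) = rank(A) = k almost surely. -/
/-!
Choose `L : k × m` and `Q : n × k` with `det (L A Q) ≠ 0`, and let `R'` be the first `k` columns
of `R`. Then `R ↦ det (L A R')` is a polynomial in the entries of `R` which does not vanish at
`R = [Q | 0]`. The zero set of a nonzero polynomial is null for any product of atomless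
measures: by Fubini in the first variable, the slices are zero sets of univariate polynomials,
which are finite, as soon as the leading coefficient (a polynomial in the remaining variables)
does not vanish. Off that null set, `rank (A R) ≥ rank (L A R') = k`, and the column space of
`A R`, a subspace of that of `A` of the same dimension, is that of `A`.
-/

open MeasureTheory ProbabilityTheory Matrix

theorem Polynomial.ae_eval_ne_zero {μ : Measure ℝ} [NullSingletonClass μ] {q : Polynomial ℝ}
    (hq : q ≠ 0) : ∀ᵐ x ∂μ, q.eval x ≠ 0 :=
  (q.roots.toFinset.finite_toSet.countable.ae_notMem μ).mono fun x hx hroot =>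
    hx (by simpa [Polynomial.mem_roots hq] using hroot)

namespace MvPolynomial

theorem ae_eval_ne_zero_of_fin {d : ℕ} (μ : Fin d → Measure ℝ) [∀ i, SigmaFinite (μ i)]
    [∀ i, NullSingletonClass (μ i)] {p : MvPolynomial (Fin d) ℝ} (hp : p ≠ 0) :
    ∀ᵐ x ∂Measure.pi μ, eval x p ≠ 0 := by
  induction d with
  | zero =>
    obtain ⟨c, rfl⟩ := C_surjective (Fin 0) p
    exact ae_of_all _ fun x => by simpa using hp
  | succ d ih =>
    set q := finSuccEquiv ℝ d p
    have hq : q ≠ 0 := (map_ne_zero_iff _ (AlgEquiv.injective _)).2 hp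
    have hmeas : MeasurableSet {z : ℝ × (Fin d → ℝ) | eval (Fin.cons z.1 z.2) p ≠ 0} :=
      (isOpen_ne_fun ((continuous_eval p).comp (by fun_prop)) continuous_const).measurableSet
    rw [← (measurePreserving_piFinSuccAbove μ 0).symm.map_eq, ae_map_iff (by fun_prop)
      (isOpen_ne_fun (continuous_eval p) continuous_const).measurableSet]
    simp only [MeasurableEquiv.piFinSuccAbove_symm_apply, Fin.insertNthEquiv, Fin.insertNth_zero',
      Equiv.coe_fn_mk, Fin.succAbove_zero]
    rw [Measure.ae_prod_iff_ae_ae hmeas, Measure.ae_ae_comm hmeas]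
    filter_upwards [ih (fun i => μ i.succ) (Polynomial.leadingCoeff_ne_zero.2 hq)] with y hy
    have hqy : q.map (eval y) ≠ 0 := fun h => hy (by simpa using congrArg (·.coeff q.natDegree) h)
    filter_upwards [Polynomial.ae_eval_ne_zero hqy] with x hx
    rwa [eval_eq_eval_mv_eval']

theorem ae_eval_ne_zero {ι : Type*} [Fintype ι] (μ : ι → Measure ℝ) [∀ i, SigmaFinite (μ i)]
    [∀ i, NullSingletonClass (μ i)] {p : MvPolynomial ι ℝ} (hp : p ≠ 0) :
    ∀ᵐ x ∂Measure.pi μ, eval x p ≠ 0 := by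
  let e := (Fintype.equivFin ι).symm
  rw [← (measurePreserving_piCongrLeft μ e).map_eq, ae_map_iff (by fun_prop)
    (isOpen_ne_fun (continuous_eval p) continuous_const).measurableSet]
  have hp' : rename e.symm p ≠ 0 :=
    (rename_injective _ e.symm.injective).ne_iff' (map_zero _) |>.2 hp
  filter_upwards [ae_eval_ne_zero_of_fin (fun i => μ (e i)) hp'] with y hy
  rw [eval_rename] at hy
  convert hy
  ext i
  simp [MeasurableEquiv.coe_piCongrLeft, Equiv.piCongrLeft_apply_eq_cast]

end MvPolynomial

namespace Matrix

variable {K m n : Type*} [Field K] [Fintype n]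

theorem det_ne_zero_of_rank_eq_card [DecidableEq n] {A : Matrix n n K}
    (h : A.rank = Fintype.card n) : A.det ≠ 0 := by
  have hrange : LinearMap.range A.mulVecLin = ⊤ :=
    Submodule.eq_top_of_finrank_eq (by rw [← rank, h, Module.finrank_fintype_fun_eq_card])
  have hA : IsUnit A := mulVec_surjective_iff_isUnit.1 (LinearMap.range_eq_top.1 hrange)
  exact ((isUnit_iff_isUnit_det A).1 hA).ne_zero

theorem exists_rank_mul_eq {k : ℕ} (A : Matrix m n K) (h : A.rank = k) :
    ∃ Q : Matrix n (Fin k) K, (A * Q).rank = k := by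
  obtain ⟨g, hg⟩ := A.mulVecLin.rangeRestrict.exists_rightInverse_of_surjective
    A.mulVecLin.range_rangeRestrict
  let e : (Fin k → K) ≃ₗ[K] LinearMap.range A.mulVecLin :=
    LinearEquiv.ofFinrankEq _ _ (by rw [Module.finrank_fin_fun, ← h, rank])
  refine ⟨LinearMap.toMatrix' (g ∘ₗ e), ?_⟩
  have hAQ : (A * LinearMap.toMatrix' (g ∘ₗ e)).mulVecLin =
      (LinearMap.range A.mulVecLin).subtype ∘ₗ e.toLinearMap := by
    refine LinearMap.ext fun v => ?_
    simpa [← mulVec_mulVec, LinearMap.toMatrix'_mulVec] using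
      congrArg Subtype.val (LinearMap.congr_fun hg (e v))
  rw [rank, hAQ, LinearMap.finrank_range_of_inj (Subtype.val_injective.comp e.injective),
    Module.finrank_fin_fun]

theorem exists_det_mul_mul_ne_zero [Fintype m] {k : ℕ} (A : Matrix m n K) (h : A.rank = k) :
    ∃ (L : Matrix (Fin k) m K) (Q : Matrix n (Fin k) K), (L * A * Q).det ≠ 0 := by
  obtain ⟨Q, hQ⟩ := A.exists_rank_mul_eq h
  obtain ⟨L, hL⟩ := (A * Q)ᵀ.exists_rank_mul_eq (by rw [rank_transpose, hQ])
  refine ⟨Lᵀ, Q, det_ne_zero_of_rank_eq_card ?_⟩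
  have hLAQ : Lᵀ * A * Q = ((A * Q)ᵀ * L)ᵀ := by
    rw [transpose_mul, transpose_transpose, Matrix.mul_assoc]
  rw [hLAQ, rank_transpose, hL, Fintype.card_fin]

theorem range_mulVecLin_mul_eq_of_rank_le {p : Type*} [Fintype p] {A : Matrix m n K}
    {B : Matrix n p K} (h : A.rank ≤ (A * B).rank) :
    LinearMap.range (A * B).mulVecLin = LinearMap.range A.mulVecLin := by
  refine Submodule.eq_of_le_of_finrank_le ?_ h
  rw [mulVecLin_mul]
  exact LinearMap.range_comp_le_range _ _

theorem ae_det_mul_ne_zero_of_ne_zero {σ κ ι : Type*} [Fintype σ] [Fintype κ] [Fintype ι]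
    [DecidableEq κ] (μ : σ → Measure ℝ) [∀ s, SigmaFinite (μ s)] [∀ s, NullSingletonClass (μ s)]
    (M : Matrix κ ι ℝ) (v : ι → κ → σ) {x₀ : σ → ℝ}
    (hx₀ : (M * of fun i j => x₀ (v i j)).det ≠ 0) :
    ∀ᵐ x ∂Measure.pi μ, (M * of fun i j => x (v i j)).det ≠ 0 := by
  obtain ⟨p, hp⟩ : ∃ p : MvPolynomial σ ℝ,
      ∀ x, MvPolynomial.eval x p = (M * of fun i j => x (v i j)).det :=
    ⟨(of fun a b => ∑ i, MvPolynomial.C (M a i) * MvPolynomial.X (v i b)).det, fun x => by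
      rw [RingHom.map_det]
      congr 1
      ext a b
      simp [mul_apply]⟩
  simp_rw [← hp] at hx₀ ⊢
  exact MvPolynomial.ae_eval_ne_zero μ fun h => hx₀ (by rw [h, map_zero])

end Matrix

theorem stmt_2 (m n k l : ℕ) (hkl : k ≤ l)
    (A : Matrix (Fin m) (Fin n) ℝ) (hrank : A.rank = k)
    (μ : Measure ((Fin n × Fin l) → ℝ))
    (hμ : μ = Measure.pi fun _ => gaussianReal 0 1) :
    ∀ᵐ R ∂μ,
      LinearMap.range (Matrix.mulVecLin (A * Matrix.of fun i j => R (i, j))) =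
          LinearMap.range (Matrix.mulVecLin A) ∧
        (A * Matrix.of fun i j => R (i, j)).rank = A.rank ∧ A.rank = k := by
  subst hμ hrank
  have := nullSingletonClass_gaussianReal (μ := 0) one_ne_zero
  obtain ⟨L, Q, hLAQ⟩ := A.exists_det_mul_mul_ne_zero rfl
  let R₀ : Fin n × Fin l → ℝ := fun x => if h : x.2.val < A.rank then Q x.1 ⟨x.2, h⟩ else 0
  have hR₀ : (of fun i j => R₀ (i, Fin.castLE hkl j)) = Q := by
    ext i j
    simp [R₀]
  filter_upwards [(L * A).ae_det_mul_ne_zero_of_ne_zero (fun _ => gaussianReal 0 1)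
    (fun i j => (i, Fin.castLE hkl j)) (x₀ := R₀) (by rwa [hR₀])] with R hR
  have hle : A.rank ≤ (A * of fun i j => R (i, j)).rank := calc
    A.rank = (L * A * of fun i j => R (i, Fin.castLE hkl j)).rank := by
      rw [rank_of_det_ne_zero hR, Fintype.card_fin]
    _ ≤ (A * of fun i j => R (i, Fin.castLE hkl j)).rank := by
      rw [Matrix.mul_assoc]
      exact rank_mul_le_right _ _
    _ = ((A * of fun i j => R (i, j)).submatrix id (Fin.castLE hkl)).rank := rfl
    _ ≤ (A * of fun i j => R (i, j)).rank := rank_submatrix_le _ _ _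
  exact ⟨range_mulVecLin_mul_eq_of_rank_le hle, le_antisymm (rank_mul_le_left _ _) hle, rfl⟩
end

section
/- Let A be a real m×n matrix of rank k ≥ 1. Then there exist a list J of k distinct column indices of A and a real k×n matrix X such that: (i) A = A(:,J)·X, where A(:,J) is the m×k submatrix of A consisting of the columns indexed by J; (ii) the k×k submatrix X(:,J) of X formed by the columns of X indexed by J is the k×k identity matrix; and (iii) every entry of X is bounded by 1 in absolute value. (This is the 'interpolatory decomposition': k columns of A are selected as a basis for the column space of A and every remaining column is expressed, with coefficients of magnitude at most 1, in terms of the chosen ones.) -/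
/-!
Choose the `k × k` submatrix `A(I,J)` of maximal `|det|`; as `rank A = k`, it is nonsingular.
Its columns `A(:,J)` are then independent, hence span the column space of `A`, and restricting
`A = A(:,J) X` to the rows `I` forces `X = A(I,J)⁻¹ A(I,:)`. By Cramer's rule `X p j` is the ratio
of `det A(I,J')` to `det A(I,J)`, where `J'` is `J` with its `p`-th entry replaced by `j`;
maximality bounds it by `1`.
-/

open Matrix

theorem exists_linearIndependent_comp_of_finrank_span_eq {K V ι : Type*} [Field K]
    [AddCommGroup V] [Module K V] [Finite ι] {v : ι → V} {k : ℕ}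
    (h : Module.finrank K (Submodule.span K (Set.range v)) = k) :
    ∃ f : Fin k → ι, LinearIndependent K (v ∘ f) := by
  obtain ⟨κ, a, ha, hspan, hli⟩ := exists_linearIndependent' K v
  have : Finite κ := Finite.of_injective a ha
  have : Fintype κ := Fintype.ofFinite κ
  have hcard : Fintype.card κ = k := by rw [← h, ← hspan, finrank_span_eq_card hli]
  let e : Fin k ≃ κ := (Fintype.equivFinOfCardEq hcard).symm
  exact ⟨a ∘ e, hli.comp e e.injective⟩

namespace Matrix

theorem updateCol_submatrix_eq_submatrix_update {α m n r : Type*} [DecidableEq r]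
    (A : Matrix m n α) (I : r → m) (J : r → n) (p : r) (j : n) :
    (A.submatrix I J).updateCol p (fun q => A (I q) j) = A.submatrix I (Function.update J p j) := by
  ext q s
  by_cases hs : s = p <;> simp [hs]

theorem injective_of_submatrix_id_eq_one {α n r : Type*} [Zero α] [One α] [NeZero (1 : α)]
    [DecidableEq r] {X : Matrix r n α} {J : r → n} (h : X.submatrix id J = 1) :
    Function.Injective J := by
  intro a b hab
  by_contra hne
  have h_entry : (1 : Matrix r r α) a a = (1 : Matrix r r α) a b := by rw [← h]; simp [hab]
  simp [one_apply_ne hne] at h_entry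

variable {K m n r : Type*} [Field K]

theorem exists_linearIndependent_rows_of_rank_eq [Fintype m] [Fintype n] {k : ℕ}
    {A : Matrix m n K} (h : A.rank = k) :
    ∃ I : Fin k → m, LinearIndependent K (A.submatrix I id).row :=
  exists_linearIndependent_comp_of_finrank_span_eq (A.rank_eq_finrank_span_row ▸ h)

theorem exists_det_submatrix_ne_zero_of_rank_eq [Fintype m] [Fintype n] {k : ℕ}
    {A : Matrix m n K} (h : A.rank = k) :
    ∃ (I : Fin k → m) (J : Fin k → n), (A.submatrix I J).det ≠ 0 := by
  obtain ⟨J, hJ⟩ := exists_linearIndependent_rows_of_rank_eq ((rank_transpose A).trans h)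
  have hB : (A.submatrix id J).rank = k := by
    rw [← rank_transpose, transpose_submatrix, hJ.rank_matrix, Fintype.card_fin]
  obtain ⟨I, hI⟩ := exists_linearIndependent_rows_of_rank_eq hB
  exact ⟨I, J, (isUnit_iff_isUnit_det _).mp (linearIndependent_rows_iff_isUnit.mp hI) |>.ne_zero⟩

theorem exists_eq_mul_of_range_mulVecLin_le [Fintype n] [Fintype r]
    {A : Matrix m n K} {B : Matrix m r K}
    (h : LinearMap.range A.mulVecLin ≤ LinearMap.range B.mulVecLin) : ∃ X, A = B * X := by
  have hcol : ∀ j, ∃ c, B *ᵥ c = A.col j := fun j =>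
    h (range_mulVecLin A ▸ Submodule.subset_span ⟨j, rfl⟩)
  choose c hc using hcol
  exact ⟨(of c)ᵀ, ext fun i j => (congrFun (hc j) i).symm⟩

variable [Fintype r] [DecidableEq r]

theorem range_mulVecLin_submatrix_id_eq [Fintype m] [Fintype n]
    {A : Matrix m n K} {I : r → m} {J : r → n}
    (hM : (A.submatrix I J).det ≠ 0) (hA : A.rank ≤ Fintype.card r) :
    LinearMap.range (A.submatrix id J).mulVecLin = LinearMap.range A.mulVecLin := by
  apply Submodule.eq_of_le_of_finrank_le
  · classical
    have hsel : A.submatrix id J = A * (1 : Matrix n n K).submatrix id J := by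
      simpa using (mul_submatrix_one (Equiv.refl n) J A).symm
    rw [hsel, mulVecLin_mul]
    exact LinearMap.range_comp_le_range _ _
  · calc A.rank ≤ Fintype.card r := hA
      _ = (A.submatrix I J).rank := (rank_of_det_ne_zero hM).symm
      _ ≤ (A.submatrix id J).rank := rank_submatrix_le (A.submatrix id J) I id

theorem eq_submatrix_mul_inv_mul_submatrix [Fintype m] [Fintype n]
    {A : Matrix m n K} {I : r → m} {J : r → n}
    (hM : (A.submatrix I J).det ≠ 0) (hA : A.rank ≤ Fintype.card r) :
    A = A.submatrix id J * ((A.submatrix I J)⁻¹ * A.submatrix I id) := by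
  obtain ⟨X, hX⟩ : ∃ X : Matrix r n K, A = A.submatrix id J * X :=
    exists_eq_mul_of_range_mulVecLin_le (range_mulVecLin_submatrix_id_eq hM hA).ge
  have hrows : A.submatrix I id = A.submatrix I J * X :=
    congrArg (fun M : Matrix m n K => M.submatrix I id) hX
  rwa [hrows, nonsing_inv_mul_cancel_left _ _ (isUnit_iff_ne_zero.mpr hM)]

theorem inv_mul_submatrix_submatrix_id_eq_one {A : Matrix m n K} {I : r → m} {J : r → n}
    (hM : (A.submatrix I J).det ≠ 0) :
    ((A.submatrix I J)⁻¹ * A.submatrix I id).submatrix id J = 1 :=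
  nonsing_inv_mul _ (isUnit_iff_ne_zero.mpr hM)

theorem inv_mul_submatrix_apply (A : Matrix m n K) (I : r → m) (J : r → n) (p : r) (j : n) :
    ((A.submatrix I J)⁻¹ * A.submatrix I id) p j =
      (A.submatrix I J).det⁻¹ * (A.submatrix I (Function.update J p j)).det := by
  have hcol : ((A.submatrix I J)⁻¹ * A.submatrix I id) p j =
      ((A.submatrix I J)⁻¹ *ᵥ fun q => A (I q) j) p := rfl
  rw [hcol, inv_def, smul_mulVec, ← cramer_eq_adjugate_mulVec, Pi.smul_apply, cramer_apply,
    updateCol_submatrix_eq_submatrix_update, Ring.inverse_eq_inv', smul_eq_mul]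

/-- No nonsingularity is assumed: if `det A(I,J) = 0`, both sides of `inv_mul_submatrix_apply`
vanish (`0⁻¹ = 0`). -/
theorem abs_inv_mul_submatrix_apply_le_one [LinearOrder K] [IsStrictOrderedRing K]
    {A : Matrix m n K} {I : r → m} {J : r → n}
    (hmax : ∀ J' : r → n, |(A.submatrix I J').det| ≤ |(A.submatrix I J).det|) (p : r) (j : n) :
    |((A.submatrix I J)⁻¹ * A.submatrix I id) p j| ≤ 1 := by
  rw [inv_mul_submatrix_apply, abs_mul, abs_inv]
  exact inv_mul_le_one_of_le₀ (hmax _) (abs_nonneg _)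

end Matrix

theorem stmt_3_general (m n k : ℕ)
    (A : Matrix (Fin m) (Fin n) ℝ) (hrank : A.rank = k) :
    ∃ (J : Fin k → Fin n) (X : Matrix (Fin k) (Fin n) ℝ),
      Function.Injective J ∧
      A = A.submatrix id J * X ∧
      X.submatrix id J = (1 : Matrix (Fin k) (Fin k) ℝ) ∧
      ∀ i j, |X i j| ≤ 1 := by
  obtain ⟨I₀, J₀, hdet₀⟩ := exists_det_submatrix_ne_zero_of_rank_eq hrank
  have : Nonempty ((Fin k → Fin m) × (Fin k → Fin n)) := ⟨(I₀, J₀)⟩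
  obtain ⟨⟨I, J⟩, hmax⟩ := Finite.exists_max
    (fun p : (Fin k → Fin m) × (Fin k → Fin n) => |(A.submatrix p.1 p.2).det|)
  have hdet : (A.submatrix I J).det ≠ 0 :=
    abs_pos.mp ((abs_pos.mpr hdet₀).trans_le (hmax (I₀, J₀)))
  have hXJ := inv_mul_submatrix_submatrix_id_eq_one hdet
  exact ⟨J, _, injective_of_submatrix_id_eq_one hXJ,
    eq_submatrix_mul_inv_mul_submatrix hdet (by rw [hrank, Fintype.card_fin]), hXJ,
    abs_inv_mul_submatrix_apply_le_one fun J' => hmax (I, J')⟩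

/-- Interpolatory decomposition: a rank-`k` matrix `A` admits a factorization
`A = A(:,J) · X` where `J` selects `k` distinct columns of `A`, `X` contains the
`k × k` identity as the submatrix of columns indexed by `J`, and all entries of `X`
are bounded by `1` in absolute value. -/
theorem stmt_3 (m n k : ℕ) (hk : 1 ≤ k)
    (A : Matrix (Fin m) (Fin n) ℝ) (hrank : A.rank = k) :
    ∃ (J : Fin k → Fin n) (X : Matrix (Fin k) (Fin n) ℝ),
      Function.Injective J ∧
      A = A.submatrix id J * X ∧
      X.submatrix id J = (1 : Matrix (Fin k) (Fin k) ℝ) ∧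
      ∀ i j, |X i j| ≤ 1 :=
  stmt_3_general m n k A hrank
end

section
/- Let A be a real m×n matrix and let S be a real m×l matrix whose column space contains the column space of A. Suppose that J is a list of row indices of S and X is a real m×j matrix such that S = X · S(J,:), where S(J,:) is the submatrix of S consisting of the rows indexed by J. Then A = X · A(J,:). (In words: if a set of rows of the sample matrix S interpolates all rows of S, then the same rows with the same interpolation coefficients interpolate all rows of any matrix A whose columns lie in the column space of S.) -/
open Matrix

theorem stmt_5 (m n l j : ℕ)
    (A : Matrix (Fin m) (Fin n) ℝ) (S : Matrix (Fin m) (Fin l) ℝ)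
    (hspan : LinearMap.range (Matrix.mulVecLin A) ≤ LinearMap.range (Matrix.mulVecLin S))
    (J : Fin j → Fin m) (X : Matrix (Fin m) (Fin j) ℝ)
    (hS : S = X * S.submatrix J id) :
    A = X * A.submatrix J id := by
  ext i k
  obtain ⟨c, hc⟩ := hspan ⟨Pi.single k 1, rfl⟩
  simp only [mulVecLin_apply] at hc
  have hsub : ∀ (p : ℕ) (M : Matrix (Fin m) (Fin p) ℝ) (v : Fin p → ℝ),
      (M.submatrix J id) *ᵥ v = fun i => (M *ᵥ v) (J i) := fun _ _ _ => rfl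
  have colEq : A *ᵥ Pi.single k 1 = (X * A.submatrix J id) *ᵥ Pi.single k 1 := by
    calc A *ᵥ Pi.single k 1 = S *ᵥ c := hc.symm
      _ = (X * S.submatrix J id) *ᵥ c := by rw [← hS]
      _ = X *ᵥ (S.submatrix J id *ᵥ c) := (mulVec_mulVec _ _ _).symm
      _ = X *ᵥ fun i => (S *ᵥ c) (J i) := by rw [hsub]
      _ = X *ᵥ fun i => (A *ᵥ Pi.single k 1) (J i) := by rw [hc]
      _ = X *ᵥ (A.submatrix J id *ᵥ Pi.single k 1) := by rw [hsub]
      _ = (X * A.submatrix J id) *ᵥ Pi.single k 1 := mulVec_mulVec _ _ _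
  have h1 := congrFun colEq i
  simpa [mulVec_single] using h1
end

section
/- Let M be a real m×n matrix. Suppose J is a list of row indices and X is a real m×j matrix such that M = X · M(J,:) (a row interpolatory factorization), and suppose J' is a list of column indices and Y is a real j'×n matrix such that M = M(:,J') · Y (a column interpolatory factorization). Then M = X · M(J,J') · Y, where M(J,J') is the submatrix of M with rows indexed by J and columns indexed by J'. -/
open Matrix

theorem stmt_8 (m n j j' : ℕ)
    (M : Matrix (Fin m) (Fin n) ℝ)
    (J : Fin j → Fin m) (X : Matrix (Fin m) (Fin j) ℝ)
    (hrow : M = X * M.submatrix J id)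
    (J' : Fin j' → Fin n) (Y : Matrix (Fin j') (Fin n) ℝ)
    (hcol : M = M.submatrix id J' * Y) :
    M = X * M.submatrix J J' * Y := by
  have h : M.submatrix id J' = X * M.submatrix J J' := by
    conv_lhs => rw [hrow]
    ext i k
    simp [Matrix.mul_apply, Matrix.submatrix_apply]
  conv_lhs => rw [hcol, h]
end

section
/- Let A be a real square matrix whose index set is partitioned into four consecutive blocks I₁, I₂, I₃, I₄ of sizes n₁, n₂, n₃, n₄ (the leaves of a two-level binary tree, with left node L = I₁ ∪ I₂ and right node R = I₃ ∪ I₄). Suppose that for each leaf j there are given matrices U_j (n_j×k) and V_j (n_j×k); that the level-2 sibling off-diagonal blocks satisfy A(I₁,I₂) = U₁·B₁₂·V₂ᵗ, A(I₂,I₁) = U₂·B₂₁·V₁ᵗ, A(I₃,I₄) = U₃·B₃₄·V₄ᵗ, A(I₄,I₃) = U₄·B₄₃·V₃ᵗ for k×k matrices B₁₂, B₂₁, B₃₄, B₄₃; and that for given 2k×k transfer matrices Û_L, Û_R, V̂_L, V̂_R and k×k matrices B_{LR}, B_{RL}, the level-1 off-diagonal blocks satisfy A(L,R) = U_L·B_{LR}·V_Rᵗ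 and A(R,L) = U_R·B_{RL}·V_Lᵗ, where U_L = diag(U₁,U₂)·Û_L, U_R = diag(U₃,U₄)·Û_R, V_L = diag(V₁,V₂)·V̂_L, V_R = diag(V₃,V₄)·V̂_R. Set U⁽²⁾ = diag(U₁,U₂,U₃,U₄), V⁽²⁾ = diag(V₁,V₂,V₃,V₄), Û⁽¹⁾ = diag(Û_L,Û_R), V̂⁽¹⁾ = diag(V̂_L,V̂_R), B⁽⁰⁾ = [[0, B_{LR}],[B_{RL}, 0]] (2k×2k), B⁽¹⁾ = diag([[0,B₁₂],[B₂₁,0]], [[0,B₃₄],[B₄₃,0]]) (4k×4k), and D⁽²⁾ = diag(A(I₁,I₁), A(I₂,I₂), A(I₃,I₃), A(I₄,I₄)). Then the telescoping factorization holds: A = U⁽²⁾·( Û⁽¹⁾·B⁽⁰⁾·(V̂⁽¹⁾)ᵗ + B⁽¹⁾ )·(V⁽²⁾)ᵗ + D⁽²⁾. -/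
open Matrix

theorem stmt_12 (n₁ n₂ n₃ n₄ k : ℕ)
    (A : Matrix ((Fin n₁ ⊕ Fin n₂) ⊕ (Fin n₃ ⊕ Fin n₄)) ((Fin n₁ ⊕ Fin n₂) ⊕ (Fin n₃ ⊕ Fin n₄)) ℝ)
    (U₁ : Matrix (Fin n₁) (Fin k) ℝ) (U₂ : Matrix (Fin n₂) (Fin k) ℝ)
    (U₃ : Matrix (Fin n₃) (Fin k) ℝ) (U₄ : Matrix (Fin n₄) (Fin k) ℝ)
    (V₁ : Matrix (Fin n₁) (Fin k) ℝ) (V₂ : Matrix (Fin n₂) (Fin k) ℝ)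
    (V₃ : Matrix (Fin n₃) (Fin k) ℝ) (V₄ : Matrix (Fin n₄) (Fin k) ℝ)
    (B₁₂ B₂₁ B₃₄ B₄₃ : Matrix (Fin k) (Fin k) ℝ)
    (UhatL UhatR VhatL VhatR : Matrix (Fin k ⊕ Fin k) (Fin k) ℝ)
    (BLR BRL : Matrix (Fin k) (Fin k) ℝ)
    -- level-2 sibling off-diagonal blocks
    (h12 : A.submatrix (Sum.inl ∘ Sum.inl) (Sum.inl ∘ Sum.inr) = U₁ * B₁₂ * V₂ᵀ)
    (h21 : A.submatrix (Sum.inl ∘ Sum.inr) (Sum.inl ∘ Sum.inl) = U₂ * B₂₁ * V₁ᵀ)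
    (h34 : A.submatrix (Sum.inr ∘ Sum.inl) (Sum.inr ∘ Sum.inr) = U₃ * B₃₄ * V₄ᵀ)
    (h43 : A.submatrix (Sum.inr ∘ Sum.inr) (Sum.inr ∘ Sum.inl) = U₄ * B₄₃ * V₃ᵀ)
    -- level-1 off-diagonal blocks, with nested bases
    (hLR : A.submatrix Sum.inl Sum.inr =
      (fromBlocks U₁ 0 0 U₂ * UhatL) * BLR * (fromBlocks V₃ 0 0 V₄ * VhatR)ᵀ)
    (hRL : A.submatrix Sum.inr Sum.inl =
      (fromBlocks U₃ 0 0 U₄ * UhatR) * BRL * (fromBlocks V₁ 0 0 V₂ * VhatL)ᵀ) :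
    -- telescoping factorization
    A =
      fromBlocks (fromBlocks U₁ 0 0 U₂) 0 0 (fromBlocks U₃ 0 0 U₄) *
        (fromBlocks UhatL 0 0 UhatR * fromBlocks 0 BLR BRL 0 *
            (fromBlocks VhatL 0 0 VhatR)ᵀ +
          fromBlocks (fromBlocks 0 B₁₂ B₂₁ 0) 0 0 (fromBlocks 0 B₃₄ B₄₃ 0)) *
        (fromBlocks (fromBlocks V₁ 0 0 V₂) 0 0 (fromBlocks V₃ 0 0 V₄))ᵀ +
      fromBlocks
        (fromBlocks (A.submatrix (Sum.inl ∘ Sum.inl) (Sum.inl ∘ Sum.inl)) 0 0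
          (A.submatrix (Sum.inl ∘ Sum.inr) (Sum.inl ∘ Sum.inr))) 0 0
        (fromBlocks (A.submatrix (Sum.inr ∘ Sum.inl) (Sum.inr ∘ Sum.inl)) 0 0
          (A.submatrix (Sum.inr ∘ Sum.inr) (Sum.inr ∘ Sum.inr))) := by
  have key : A =
      fromBlocks
        (fromBlocks (A.submatrix (Sum.inl ∘ Sum.inl) (Sum.inl ∘ Sum.inl))
          (A.submatrix (Sum.inl ∘ Sum.inl) (Sum.inl ∘ Sum.inr))
          (A.submatrix (Sum.inl ∘ Sum.inr) (Sum.inl ∘ Sum.inl))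
          (A.submatrix (Sum.inl ∘ Sum.inr) (Sum.inl ∘ Sum.inr)))
        (A.submatrix Sum.inl Sum.inr)
        (A.submatrix Sum.inr Sum.inl)
        (fromBlocks (A.submatrix (Sum.inr ∘ Sum.inl) (Sum.inr ∘ Sum.inl))
          (A.submatrix (Sum.inr ∘ Sum.inl) (Sum.inr ∘ Sum.inr))
          (A.submatrix (Sum.inr ∘ Sum.inr) (Sum.inr ∘ Sum.inl))
          (A.submatrix (Sum.inr ∘ Sum.inr) (Sum.inr ∘ Sum.inr))) := by
    ext (i | i) (j | j) <;> rcases i with i | i <;> rcases j with j | j <;>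
      simp [fromBlocks, Matrix.submatrix]
  conv_lhs => rw [key]
  rw [h12, h21, h34, h43, hLR, hRL]
  simp only [Matrix.fromBlocks_transpose, Matrix.transpose_zero, Matrix.fromBlocks_multiply,
    Matrix.fromBlocks_add, Matrix.zero_mul, Matrix.mul_zero, add_zero, zero_add,
    Matrix.transpose_mul, Matrix.mul_assoc]
end
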